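/- Let X_* ∈ 𝕆^{n×k} with rank(X_*ᵀD) = k. Then the problem max_{Q ∈ 𝕆^{k×k}} f_θ(X_*Q) has a unique maximizer; equivalently, among all X ∈ 𝕆^{n×k} with the same column space as X_*, there is exactly one maximizer of f_θ. -/

import Mathlib

/-!
Every orthonormal basis `X` of the column space of `X_*` is `X_* Q` with `Q = X_*ᵀ X` orthogonal,
and `f_θ(X_* Q) = (tr(X_*ᵀ A X_*) + tr(Qᵀ C)) / tr(X_*ᵀ B X_*)^θ` with `C = X_*ᵀ D` invertible and a
denominator that is positive (the rank condition on `B` keeps `B X_*` from vanishing) and independent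
of `Q`. So both problems are the orthogonal Procrustes problem `max tr(Qᵀ C)`. Writing `C = U P`
with `P = (Cᵀ C)^{1/2}` positive definite and `U` orthogonal, `tr(Qᵀ C) = tr(R P)` with `R = Qᵀ U`
orthogonal, and for `P = Sᵀ S` one has `tr P - tr(R P) = ½ ‖S - S Rᵀ‖²`, which vanishes only for
`R = 1`, i.e. `Q = U`.
-/

open Matrix

noncomputable section

/-- `f_θ(X) = tr(XᵀAX + XᵀD) / (tr(XᵀBX))^θ`. -/
def fTheta {n k : ℕ} (A B : Matrix (Fin n) (Fin n) ℝ) (D : Matrix (Fin n) (Fin k) ℝ)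
    (θ : ℝ) (X : Matrix (Fin n) (Fin k) ℝ) : ℝ :=
  (trace (Xᵀ * A * X) + trace (Xᵀ * D)) / trace (Xᵀ * B * X) ^ θ

namespace Matrix

variable {m l : Type*}

lemma range_mulVecLin_mul_of_isUnit {K : Type*} [Field K] [Fintype l] [DecidableEq l]
    (X : Matrix m l K) {Q : Matrix l l K} (hQ : IsUnit Q) :
    LinearMap.range (X * Q).mulVecLin = LinearMap.range X.mulVecLin := by
  rw [mulVecLin_mul, LinearMap.range_comp_of_range_eq_top]
  exact LinearMap.range_eq_top.mpr (mulVec_surjective_iff_isUnit.mpr hQ)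

variable [Fintype m]

lemma PosSemidef.exists_eq_transpose_mul_self {P : Matrix m m ℝ} (hP : P.PosSemidef) :
    ∃ S : Matrix m m ℝ, P = Sᵀ * S := by
  classical
  open scoped MatrixOrder in
  obtain ⟨S, rfl⟩ := CStarAlgebra.nonneg_iff_eq_star_mul_self.mp hP.nonneg
  exact ⟨S, by rw [star_eq_conjTranspose, conjTranspose_eq_transpose_of_trivial]⟩

lemma trace_transpose_mul_mul_pos [Fintype l] {B : Matrix m m ℝ} (hB : B.PosSemidef)
    {X : Matrix m l ℝ} (h : Fintype.card m < B.rank + X.rank) : 0 < trace (Xᵀ * B * X) := by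
  obtain ⟨S, rfl⟩ := hB.exists_eq_transpose_mul_self
  have hSX : Xᵀ * (Sᵀ * S) * X = (S * X)ᴴ * (S * X) := by
    rw [conjTranspose_eq_transpose_of_trivial, transpose_mul]
    simp only [Matrix.mul_assoc]
  rw [hSX]
  refine (posSemidef_conjTranspose_mul_self _).trace_nonneg.lt_of_ne fun h0 => h.not_ge ?_
  refine rank_add_rank_le_card_of_mul_eq_zero ?_
  rw [Matrix.mul_assoc, trace_conjTranspose_mul_self_eq_zero_iff.mp h0.symm, Matrix.mul_zero]

lemma transpose_mul_self_mul_eq_one [Fintype l] [DecidableEq l] {X : Matrix m l ℝ}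
    {Q : Matrix l l ℝ} (hX : Xᵀ * X = 1) (hQ : Qᵀ * Q = 1) : (X * Q)ᵀ * (X * Q) = 1 := by
  rw [transpose_mul, Matrix.mul_assoc, ← Matrix.mul_assoc Xᵀ, hX, Matrix.one_mul, hQ]

section Square

variable [DecidableEq m]

lemma trace_transpose_mul_self_sub_mul_transpose (S R : Matrix m m ℝ) (hR : Rᵀ * R = 1) :
    trace ((S - S * Rᵀ)ᵀ * (S - S * Rᵀ)) = 2 * (trace (Sᵀ * S) - trace (R * (Sᵀ * S))) := by
  have hcross : trace (Sᵀ * S * Rᵀ) = trace (R * (Sᵀ * S)) := by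
    rw [← trace_transpose]
    simp only [transpose_mul, transpose_transpose, Matrix.mul_assoc]
  have hlast : trace (R * Sᵀ * (S * Rᵀ)) = trace (Sᵀ * S) := by
    rw [trace_mul_comm, Matrix.mul_assoc, ← Matrix.mul_assoc Rᵀ, hR, Matrix.one_mul,
      trace_mul_comm]
  simp only [transpose_sub, transpose_mul, transpose_transpose, sub_mul, mul_sub, trace_sub]
  rw [hlast, Matrix.mul_assoc R, ← Matrix.mul_assoc Sᵀ, hcross]
  ring

lemma PosSemidef.trace_mul_le_trace {P R : Matrix m m ℝ} (hP : P.PosSemidef)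
    (hR : Rᵀ * R = 1) : trace (R * P) ≤ trace P := by
  obtain ⟨S, rfl⟩ := hP.exists_eq_transpose_mul_self
  have hnorm := (posSemidef_conjTranspose_mul_self (S - S * Rᵀ)).trace_nonneg
  rw [conjTranspose_eq_transpose_of_trivial, trace_transpose_mul_self_sub_mul_transpose S R hR]
    at hnorm
  linarith

lemma PosDef.eq_one_of_trace_mul_eq_trace {P R : Matrix m m ℝ} (hP : P.PosDef)
    (hR : Rᵀ * R = 1) (h : trace (R * P) = trace P) : R = 1 := by
  obtain ⟨S, rfl⟩ := hP.posSemidef.exists_eq_transpose_mul_self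
  have hS : IsUnit S := isUnit_of_mul_isUnit_right hP.isUnit
  have hzero : S - S * Rᵀ = 0 := by
    rw [← trace_conjTranspose_mul_self_eq_zero_iff, conjTranspose_eq_transpose_of_trivial,
      trace_transpose_mul_self_sub_mul_transpose S R hR, h, sub_self, mul_zero]
  have hRt : Rᵀ = 1 := hS.mul_left_cancel (by rw [mul_one]; exact (sub_eq_zero.mp hzero).symm)
  rw [← transpose_transpose R, hRt, transpose_one]

open scoped MatrixOrder in
theorem existsUnique_isMax_trace_transpose_mul {C : Matrix m m ℝ} (hC : IsUnit C) :
    ∃! Q : Matrix m m ℝ, Qᵀ * Q = 1 ∧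
      ∀ Q' : Matrix m m ℝ, Q'ᵀ * Q' = 1 → trace (Q'ᵀ * C) ≤ trace (Qᵀ * C) := by
  have hCC : (Cᵀ * C).PosSemidef := by
    simpa only [conjTranspose_eq_transpose_of_trivial] using posSemidef_conjTranspose_mul_self C
  set P := CFC.sqrt (Cᵀ * C)
  have hPsd : P.PosSemidef := (CFC.sqrt_nonneg _).posSemidef
  have hPP : P * P = Cᵀ * C := CFC.sqrt_mul_sqrt_self _ hCC.nonneg
  have hPt : Pᵀ = P := by rw [← conjTranspose_eq_transpose_of_trivial]; exact hPsd.1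
  have hPu : IsUnit P := isUnit_of_mul_isUnit_left (hPP ▸ (C.isUnit_transpose.mpr hC).mul hC)
  have hPd : IsUnit P.det := (isUnit_iff_isUnit_det P).mp hPu
  have hP : P.PosDef := hPsd.posDef_iff_isUnit.mpr hPu
  -- the polar decomposition `C = U * P`
  set U := C * P⁻¹
  have hUP : U * P = C := nonsing_inv_mul_cancel_right _ _ hPd
  have hU : Uᵀ * U = 1 := by
    rw [transpose_mul, transpose_nonsing_inv, hPt, Matrix.mul_assoc, ← Matrix.mul_assoc Cᵀ,
      ← hPP, mul_nonsing_inv_cancel_right _ _ hPd, nonsing_inv_mul _ hPd]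
  have htrace (Q : Matrix m m ℝ) : trace (Qᵀ * C) = trace ((Qᵀ * U) * P) := by
    rw [Matrix.mul_assoc, hUP]
  have hR {Q : Matrix m m ℝ} (hQ : Qᵀ * Q = 1) : (Qᵀ * U)ᵀ * (Qᵀ * U) = 1 :=
    transpose_mul_self_mul_eq_one (by rw [transpose_transpose]; exact mul_eq_one_comm.mp hQ) hU
  refine ⟨U, ⟨hU, fun Q' hQ' => ?_⟩, fun Q ⟨hQ, hmax⟩ => ?_⟩
  · rw [htrace, htrace, hU, Matrix.one_mul]
    exact hPsd.trace_mul_le_trace (hR hQ')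
  · have hQU : Qᵀ * U = 1 := by
      refine hP.eq_one_of_trace_mul_eq_trace (hR hQ)
        (le_antisymm (hPsd.trace_mul_le_trace (hR hQ)) ?_)
      simpa only [htrace, hU, Matrix.one_mul] using hmax U hU
    rw [← Matrix.mul_one Q, ← hQU, ← Matrix.mul_assoc, mul_eq_one_comm.mp hQ, Matrix.one_mul]

lemma isUnit_of_rank_eq_card {K : Type*} [Field K] {C : Matrix m m K}
    (h : C.rank = Fintype.card m) : IsUnit C := by
  refine mulVec_surjective_iff_isUnit.mp (LinearMap.range_eq_top (f := C.mulVecLin) |>.mp ?_)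
  exact Submodule.eq_top_of_finrank_eq (by rw [Module.finrank_fintype_fun_eq_card]; exact h)

end Square

section Stiefel

variable [Fintype l] [DecidableEq l] {X Y : Matrix m l ℝ}

lemma mul_transpose_mul_of_range_le (hY : Yᵀ * Y = 1)
    (h : LinearMap.range X.mulVecLin ≤ LinearMap.range Y.mulVecLin) : Y * (Yᵀ * X) = X := by
  refine ext_iff_mulVec.mpr fun v => ?_
  obtain ⟨w, hw⟩ := h ⟨v, rfl⟩
  simp only [mulVecLin_apply] at hw
  rw [← mulVec_mulVec, ← mulVec_mulVec, ← hw, mulVec_mulVec w Yᵀ Y, hY, one_mulVec]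

lemma exists_eq_mul_of_range_eq (hX : Xᵀ * X = 1) (hY : Yᵀ * Y = 1)
    (h : LinearMap.range X.mulVecLin = LinearMap.range Y.mulVecLin) :
    ∃ Q : Matrix l l ℝ, Qᵀ * Q = 1 ∧ X = Y * Q := by
  have hXY : Y * (Yᵀ * X) = X := mul_transpose_mul_of_range_le hY h.le
  refine ⟨Yᵀ * X, ?_, hXY.symm⟩
  rw [transpose_mul, transpose_transpose, Matrix.mul_assoc, hXY, hX]

theorem existsUnique_isMax_of_range_eq {β : Type*} [LE β] (F : Matrix m l ℝ → β)
    (hY : Yᵀ * Y = 1)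
    (h : ∃! Q : Matrix l l ℝ, Qᵀ * Q = 1 ∧
      ∀ Q' : Matrix l l ℝ, Q'ᵀ * Q' = 1 → F (Y * Q') ≤ F (Y * Q)) :
    ∃! X : Matrix m l ℝ,
      (Xᵀ * X = 1 ∧ LinearMap.range X.mulVecLin = LinearMap.range Y.mulVecLin) ∧
        ∀ Z : Matrix m l ℝ, Zᵀ * Z = 1 →
          LinearMap.range Z.mulVecLin = LinearMap.range Y.mulVecLin → F Z ≤ F X := by
  obtain ⟨Q₀, ⟨hQ₀, hmax⟩, huniq⟩ := h
  have hmem {Q : Matrix l l ℝ} (hQ : Qᵀ * Q = 1) : (Y * Q)ᵀ * (Y * Q) = 1 ∧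
      LinearMap.range (Y * Q).mulVecLin = LinearMap.range Y.mulVecLin :=
    ⟨transpose_mul_self_mul_eq_one hY hQ,
      range_mulVecLin_mul_of_isUnit Y ⟨⟨Q, Qᵀ, mul_eq_one_comm.mp hQ, hQ⟩, rfl⟩⟩
  refine ⟨Y * Q₀, ⟨hmem hQ₀, fun Z hZ hZr => ?_⟩, ?_⟩
  · obtain ⟨Q, hQ, rfl⟩ := exists_eq_mul_of_range_eq hZ hY hZr
    exact hmax Q hQ
  · rintro X ⟨⟨hX, hXr⟩, hXmax⟩
    obtain ⟨Q, hQ, rfl⟩ := exists_eq_mul_of_range_eq hX hY hXr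
    exact congrArg (Y * ·) (huniq Q ⟨hQ, fun Q' hQ' => hXmax _ (hmem hQ').1 (hmem hQ').2⟩)

end Stiefel

end Matrix

section fTheta

variable {n k : ℕ} {A B : Matrix (Fin n) (Fin n) ℝ} {D : Matrix (Fin n) (Fin k) ℝ} {θ : ℝ}
  {X : Matrix (Fin n) (Fin k) ℝ}

lemma fTheta_mul_orthogonal {Q : Matrix (Fin k) (Fin k) ℝ} (hQ : Qᵀ * Q = 1) :
    fTheta A B D θ (X * Q) =
      (trace (Xᵀ * A * X) + trace (Qᵀ * (Xᵀ * D))) / trace (Xᵀ * B * X) ^ θ := by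
  have hconj (E : Matrix (Fin n) (Fin n) ℝ) :
      trace ((X * Q)ᵀ * E * (X * Q)) = trace (Xᵀ * E * X) := by
    rw [transpose_mul, Matrix.mul_assoc, Matrix.mul_assoc, trace_mul_comm, ← Matrix.mul_assoc,
      ← Matrix.mul_assoc, Matrix.mul_assoc _ Q, mul_eq_one_comm.mp hQ, Matrix.mul_one]
  rw [fTheta, hconj, hconj, transpose_mul, Matrix.mul_assoc Qᵀ]

lemma fTheta_mul_le_mul_iff (hB : 0 < trace (Xᵀ * B * X)) {Q Q' : Matrix (Fin k) (Fin k) ℝ}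
    (hQ : Qᵀ * Q = 1) (hQ' : Q'ᵀ * Q' = 1) :
    fTheta A B D θ (X * Q') ≤ fTheta A B D θ (X * Q) ↔
      trace (Q'ᵀ * (Xᵀ * D)) ≤ trace (Qᵀ * (Xᵀ * D)) := by
  rw [fTheta_mul_orthogonal hQ, fTheta_mul_orthogonal hQ',
    div_le_div_iff_of_pos_right (Real.rpow_pos_of_pos hB θ), add_le_add_iff_left]

theorem existsUnique_isMax_fTheta_mul (hB : 0 < trace (Xᵀ * B * X)) (hC : IsUnit (Xᵀ * D)) :
    ∃! Q : Matrix (Fin k) (Fin k) ℝ, Qᵀ * Q = 1 ∧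
      ∀ Q' : Matrix (Fin k) (Fin k) ℝ, Q'ᵀ * Q' = 1 →
        fTheta A B D θ (X * Q') ≤ fTheta A B D θ (X * Q) := by
  refine (existsUnique_congr fun Q => ?_).mpr (existsUnique_isMax_trace_transpose_mul hC)
  exact and_congr_right fun hQ => forall₂_congr fun _ hQ' => fTheta_mul_le_mul_iff hB hQ hQ'

end fTheta

theorem stmt12_general {n k : ℕ}
    (A B : Matrix (Fin n) (Fin n) ℝ) (hB : B.PosSemidef)
    (hrank : n - k < B.rank)
    (D : Matrix (Fin n) (Fin k) ℝ) (θ : ℝ)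
    (Xs : Matrix (Fin n) (Fin k) ℝ) (hXs : Xsᵀ * Xs = 1)
    (hfull : (Xsᵀ * D).rank = k) :
    (∃! Q : Matrix (Fin k) (Fin k) ℝ, Qᵀ * Q = 1 ∧
        ∀ Q' : Matrix (Fin k) (Fin k) ℝ, Q'ᵀ * Q' = 1 →
          fTheta A B D θ (Xs * Q') ≤ fTheta A B D θ (Xs * Q))
      ∧ (∃! X : Matrix (Fin n) (Fin k) ℝ, (Xᵀ * X = 1
            ∧ LinearMap.range X.mulVecLin = LinearMap.range Xs.mulVecLin)
          ∧ ∀ Y : Matrix (Fin n) (Fin k) ℝ, Yᵀ * Y = 1 →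
              LinearMap.range Y.mulVecLin = LinearMap.range Xs.mulVecLin →
              fTheta A B D θ Y ≤ fTheta A B D θ X) := by
  have hXs_rank : Xs.rank = k := by simpa [hXs] using (rank_transpose_mul_self Xs).symm
  have hden : 0 < trace (Xsᵀ * B * Xs) :=
    trace_transpose_mul_mul_pos hB (by rw [Fintype.card_fin, hXs_rank]; omega)
  have hC : IsUnit (Xsᵀ * D) := isUnit_of_rank_eq_card (by rw [hfull, Fintype.card_fin])
  have hQ_max := existsUnique_isMax_fTheta_mul (A := A) (θ := θ) hden hC
  exact ⟨hQ_max, existsUnique_isMax_of_range_eq _ hXs hQ_max⟩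

/-- Corollary 3.6: if `rank(X_*ᵀD) = k`, then `max_{Q ∈ 𝕆^{k×k}} f_θ(X_*Q)` has a unique
maximizer; equivalently, among all `X ∈ 𝕆^{n×k}` with the same column space as `X_*`
there is exactly one maximizer of `f_θ`. -/
theorem stmt12 {n k : ℕ} (hk : 1 ≤ k) (hkn : k < n)
    (A B : Matrix (Fin n) (Fin n) ℝ) (hA : A.IsSymm) (hB : B.PosSemidef)
    (hrank : n - k < B.rank)
    (D : Matrix (Fin n) (Fin k) ℝ) (θ : ℝ) (hθ0 : 0 ≤ θ) (hθ1 : θ ≤ 1)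
    (Xs : Matrix (Fin n) (Fin k) ℝ) (hXs : Xsᵀ * Xs = 1)
    (hfull : (Xsᵀ * D).rank = k) :
    (∃! Q : Matrix (Fin k) (Fin k) ℝ, Qᵀ * Q = 1 ∧
        ∀ Q' : Matrix (Fin k) (Fin k) ℝ, Q'ᵀ * Q' = 1 →
          fTheta A B D θ (Xs * Q') ≤ fTheta A B D θ (Xs * Q))
      ∧ (∃! X : Matrix (Fin n) (Fin k) ℝ, (Xᵀ * X = 1
            ∧ LinearMap.range X.mulVecLin = LinearMap.range Xs.mulVecLin)
          ∧ ∀ Y : Matrix (Fin n) (Fin k) ℝ, Yᵀ * Y = 1 →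
              LinearMap.range Y.mulVecLin = LinearMap.range Xs.mulVecLin →
              fTheta A B D θ Y ≤ fTheta A B D θ X) :=
  stmt12_general A B hB hrank D θ Xs hXs hfull
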